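/- Let μ and ν be probability measures on ℝ, each with integrable identity of mean zero, ν((-∞,0)) = 1/2 = ν((0,∞)), and ν gives positive mass to (-∞,0) and (0,∞). Let F > 0, H > 0 and C be real numbers and set π_x(θ,ω) = (B + θ)·F + ω·H − C for a real constant B. Let v < 0. Then, under the product measure μ ⊗ ν, the cross-partial N = v·[ (1/2)·∫_{ℝ×(-∞,0)} π_x d(μ⊗ν) − (1/2)·∫_{ℝ×(0,∞)} π_x d(μ⊗ν) ] is strictly positive; consequently, for any D < 0, ∂x*/∂γ = −N/D is strictly positive. (Proposition 3.1, risk-increasing case: an index insurance contract triggered on the extraction shock at ω̄ = 0 increases optimal input use and harvest when h'(x) > 0 and the shocks are independent.) -/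

import Mathlib

open MeasureTheory Set

/-! By independence, the integral of the marginal profit over `ℝ × S` splits as
`ν(S) · ∫ ((B + θ) F - C) dμ + H · ∫_S ω dν`. The two trigger states have the same mass, so
the `θ`-part cancels in `N`; since `ν` has mean zero, the two tail integrals of `ω` are
opposite, whence `N = -v · H · ∫_{ω > 0} ω dν > 0`. -/

theorem setIntegral_univ_prod_add {α β : Type*} [MeasurableSpace α] [MeasurableSpace β]
    {μ : Measure α} {ν : Measure β} [IsFiniteMeasure μ] [IsFiniteMeasure ν]
    {f : α → ℝ} {g : β → ℝ} {s : Set β} (hf : Integrable f μ) (hg : IntegrableOn g s ν) :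
    ∫ z in univ ×ˢ s, f z.1 + g z.2 ∂μ.prod ν
      = ν.real s * ∫ x, f x ∂μ + μ.real univ * ∫ y in s, g y ∂ν := by
  rw [← Measure.prod_restrict, Measure.restrict_univ,
    integral_add (hf.comp_fst _) (hg.comp_snd _), integral_fun_fst, integral_fun_snd,
    measureReal_restrict_apply_univ, smul_eq_mul, smul_eq_mul]

theorem setIntegral_Iio_add_setIntegral_Ioi {ν : Measure ℝ} {f : ℝ → ℝ} {a : ℝ}
    (hf : Integrable f ν) (ha : f a = 0) :
    ∫ x in Iio a, f x ∂ν + ∫ x in Ioi a, f x ∂ν = ∫ x, f x ∂ν := by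
  rw [← setIntegral_union ((Iio_disjoint_Ici le_rfl).mono_right Ioi_subset_Ici_self)
    measurableSet_Ioi hf.integrableOn hf.integrableOn, Iio_union_Ioi]
  exact setIntegral_eq_integral_of_forall_compl_eq_zero fun x hx => by
    rw [notMem_compl_iff.mp hx, ha]

theorem setIntegral_id_Ioi_pos {ν : Measure ℝ} (hν : Integrable id ν)
    (hpos : ν (Ioi 0) ≠ 0) :
    0 < ∫ x in Ioi 0, x ∂ν := by
  refine (setIntegral_pos_iff_support_of_nonneg_ae ?_ hν.integrableOn).2 ?_
  · exact (ae_restrict_iff' measurableSet_Ioi).2 (.of_forall fun x hx => le_of_lt hx)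
  · have hsupp : Ioi (0 : ℝ) ⊆ Function.support id := fun x hx => ne_of_gt hx
    rwa [inter_eq_right.mpr hsupp, pos_iff_ne_zero]

theorem stmt_8_general (μ ν : Measure ℝ) [IsProbabilityMeasure μ] [IsProbabilityMeasure ν]
    (hIntμ : Integrable id μ)
    (hIntν : Integrable id ν) (hmeanν : ∫ ω, ω ∂ν = 0)
    (hmed1 : ν (Iio 0) = 1/2) (hmed2 : ν (Ioi 0) = 1/2)
    (B F H C v : ℝ) (hH : 0 < H) (hv : v < 0)
    (N : ℝ)
    (hN : N = v * ((1/2) * ∫ p in (univ : Set ℝ) ×ˢ (Iio (0 : ℝ)),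
              ((B + p.1) * F + p.2 * H - C) ∂(μ.prod ν)
            - (1/2) * ∫ p in (univ : Set ℝ) ×ˢ (Ioi (0 : ℝ)),
              ((B + p.1) * F + p.2 * H - C) ∂(μ.prod ν))) :
    0 < N ∧ ∀ D : ℝ, D < 0 → 0 < -N / D := by
  have hprofit : Integrable (fun θ => (B + θ) * F - C) μ :=
    (((integrable_const B).add hIntμ).mul_const F).sub (integrable_const C)
  have hsplit (s : Set ℝ) : ∫ p in univ ×ˢ s, ((B + p.1) * F + p.2 * H - C) ∂(μ.prod ν)
      = ν.real s * ∫ θ, (B + θ) * F - C ∂μ + H * ∫ ω in s, ω ∂ν := by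
    simp only [add_sub_right_comm _ (_ * H)]
    rw [setIntegral_univ_prod_add (g := (· * H)) hprofit (hIntν.integrableOn.mul_const H),
      integral_mul_const, probReal_univ]
    ring
  have hhalves : ν.real (Iio 0) = ν.real (Ioi 0) := by simp only [measureReal_def, hmed1, hmed2]
  have htails : ∫ ω in Iio 0, ω ∂ν + ∫ ω in Ioi 0, ω ∂ν = 0 :=
    (setIntegral_Iio_add_setIntegral_Ioi (f := fun ω => ω) hIntν rfl).trans hmeanν
  have hNeq : N = -v * H * ∫ ω in Ioi 0, ω ∂ν := by
    rw [hN, hsplit, hsplit, hhalves]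
    linear_combination v * H / 2 * htails
  have hNpos : 0 < N := hNeq ▸ mul_pos (mul_pos (neg_pos.2 hv) hH)
    (setIntegral_id_Ioi_pos hIntν (by simp [hmed2]))
  exact ⟨hNpos, fun D hD => div_pos_of_neg_of_neg (neg_neg_of_pos hNpos) hD⟩

/-- Proposition 3.1, risk-increasing case: with independent mean-zero shocks
(product measure μ ⊗ ν), marginal profit π_x(θ,ω) = (B + θ)·F + ω·H − C with
F > 0 and H > 0, median-0 trigger on ω (ν(−∞,0) = 1/2 = ν(0,∞), both with
positive mass), and concave utility (common second derivative v < 0), the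
cross-partial N = v·[(1/2)·∫_{ℝ×(−∞,0)} π_x − (1/2)·∫_{ℝ×(0,∞)} π_x] is
strictly positive; hence for any D < 0, ∂x*/∂γ = −N/D > 0: the contract on the
extraction shock increases optimal input use and harvest. -/
theorem stmt_8 (μ ν : Measure ℝ) [IsProbabilityMeasure μ] [IsProbabilityMeasure ν]
    (hIntμ : Integrable id μ) (hmeanμ : ∫ θ, θ ∂μ = 0)
    (hIntν : Integrable id ν) (hmeanν : ∫ ω, ω ∂ν = 0)
    (hmed1 : ν (Iio 0) = 1/2) (hmed2 : ν (Ioi 0) = 1/2)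
    (hneg : 0 < ν (Iio 0)) (hpos : 0 < ν (Ioi 0))
    (B F H C v : ℝ) (hF : 0 < F) (hH : 0 < H) (hv : v < 0)
    (N : ℝ)
    (hN : N = v * ((1/2) * ∫ p in (univ : Set ℝ) ×ˢ (Iio (0 : ℝ)),
              ((B + p.1) * F + p.2 * H - C) ∂(μ.prod ν)
            - (1/2) * ∫ p in (univ : Set ℝ) ×ˢ (Ioi (0 : ℝ)),
              ((B + p.1) * F + p.2 * H - C) ∂(μ.prod ν))) :
    0 < N ∧ ∀ D : ℝ, D < 0 → 0 < -N / D :=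
  stmt_8_general μ ν hIntμ hIntν hmeanν hmed1 hmed2 B F H C v hH hv N hN
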